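/- arXiv:1710.05078 — 2 statements merged into one kernel-verified Lean document; each statement's English description precedes it below -/
import Mathlib

section
/- (Metric Transform Rigidity) Let (X,d) be a metric space containing a rough geodesic ray, and let φ : [0,∞) → [0,∞) be an approximately nondecreasing, unbounded metric transform. If the transformed space (X,d_φ) is Gromov hyperbolic and roughly geodesic, then φ is an approximate dilation and (X,d) is Gromov hyperbolic and roughly geodesic. -/
/-- `d` is a metric on `X`: it vanishes exactly on the diagonal, is symmetric,
and satisfies the triangle inequality. -/
def IsMetricOn {X : Type*} (d : X → X → ℝ) : Prop :=
  (∀ x y : X, d x y = 0 ↔ x = y) ∧ (∀ x y : X, d x y = d y x) ∧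
    (∀ x y z : X, d x z ≤ d x y + d y z)

/-- `φ : [0,∞) → [0,∞)` is a metric transform: for every metric space `(X,d)`,
`φ ∘ d` is again a metric on `X`. -/
def IsMetricTransform (φ : ℝ → ℝ) : Prop :=
  ∀ (X : Type) (d : X → X → ℝ), IsMetricOn d → IsMetricOn (fun x y => φ (d x y))

/-- The Gromov product `(x|y)_w` for a distance function `d`. -/
noncomputable def gromovProd {X : Type*} (d : X → X → ℝ) (w x y : X) : ℝ :=
  (d x w + d y w - d x y) / 2

/-- `d` is `δ`-hyperbolic: `(x|y)_w ≥ min{(x|z)_w, (y|z)_w} − δ` for all `x,y,z,w`. -/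
def IsDeltaHyp {X : Type*} (d : X → X → ℝ) (δ : ℝ) : Prop :=
  ∀ w x y z : X, min (gromovProd d w x z) (gromovProd d w y z) - δ ≤ gromovProd d w x y

/-- `d` is Gromov hyperbolic: it is `δ`-hyperbolic for some `δ ≥ 0`. -/
def IsGromovHyp {X : Type*} (d : X → X → ℝ) : Prop :=
  ∃ δ : ℝ, 0 ≤ δ ∧ IsDeltaHyp d δ

/-- `φ` is approximately nondecreasing on `[0,∞)`:
`η`-nondecreasing for some `η ≥ 0`. -/
def ApproxNondecreasing (φ : ℝ → ℝ) : Prop :=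
  ∃ η : ℝ, 0 ≤ η ∧ ∀ t s : ℝ, 0 ≤ t → t ≤ s → φ t ≤ φ s + η

/-- `φ` is unbounded on `[0,∞)`. -/
def UnboundedOnNonneg (φ : ℝ → ℝ) : Prop :=
  ∀ M : ℝ, ∃ t : ℝ, 0 ≤ t ∧ M < φ t

/-- `φ` is a `(λ,k)`-approximate dilation for some `λ > 0`, `k ≥ 0`. -/
def ApproxDilation (φ : ℝ → ℝ) : Prop :=
  ∃ lam k : ℝ, 0 < lam ∧ 0 ≤ k ∧ ∀ t : ℝ, 0 ≤ t → |φ t - lam * t| ≤ k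

/-- `φ` is logarithm-like: `t ↦ φ(2t) − φ(t)` is bounded from above on `[0,∞)`. -/
def LogarithmLike (φ : ℝ → ℝ) : Prop :=
  ∃ C : ℝ, ∀ t : ℝ, 0 ≤ t → φ (2 * t) - φ t ≤ C

/-- The distance `|x − y|_φ = φ(|x − y|)` on the half line `[0,∞)`. -/
noncomputable def halfLineDist (φ : ℝ → ℝ) (x y : {t : ℝ // 0 ≤ t}) : ℝ :=
  φ |x.1 - y.1|

/-- `(X,d)` contains a `k`-rough geodesic ray for some `k ≥ 0`. -/
def HasRoughGeodesicRay (X : Type*) (d : X → X → ℝ) : Prop :=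
  ∃ k : ℝ, 0 ≤ k ∧ ∃ γ : ℝ → X, ∀ t s : ℝ, 0 ≤ t → 0 ≤ s →
    |t - s| - k ≤ d (γ t) (γ s) ∧ d (γ t) (γ s) ≤ |t - s| + k

/-- `d` is approximately ultrametric: `δ`-ultrametric for some `δ ≥ 0`. -/
def ApproxUltrametric {X : Type*} (d : X → X → ℝ) : Prop :=
  ∃ δ : ℝ, 0 ≤ δ ∧ ∀ x y z : X, d x y ≤ max (d x z) (d z y) + δ

/-- `d` is `k`-roughly geodesic: every pair of points is joined by a `k`-rough
geodesic segment. -/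
def RoughlyGeodesicK {X : Type*} (d : X → X → ℝ) (k : ℝ) : Prop :=
  ∀ x y : X, ∃ b : ℝ, 0 ≤ b ∧ ∃ γ : ℝ → X, γ 0 = x ∧ γ b = y ∧
    ∀ t s : ℝ, t ∈ Set.Icc 0 b → s ∈ Set.Icc 0 b →
      |t - s| - k ≤ d (γ t) (γ s) ∧ d (γ t) (γ s) ≤ |t - s| + k

/-- `d` has the `k`-rough midpoint property. -/
def RoughMidpointK {X : Type*} (d : X → X → ℝ) (k : ℝ) : Prop :=
  ∀ x y : X, ∃ z : X, max (d x z) (d y z) ≤ d x y / 2 + k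

/-- `(a,b,c)` is a triangle triplet. -/
def IsTriangleTriplet (a b c : ℝ) : Prop := a ≤ b + c ∧ b ≤ a + c ∧ c ≤ a + b


/-!
Applying the metric transform `φ` to the line `(ℝ, |·|)` shows that `φ(0) = 0` and that `φ` is
subadditive on `[0,∞)`. Conversely, `φ` is superadditive up to a constant: follow a rough
`d_φ`-geodesic from `γ(0)` to `γ(s + t)` on the rough `d`-geodesic ray `γ`. Its `d`-steps are
uniformly bounded because `φ` tends to infinity, so it passes within bounded `d`-distance of the
sphere of radius `s` around `γ(0)`, and there it splits `φ(s + t)` into roughly `φ(s) + φ(t)`.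
A function that is additive up to a constant is a dilation up to a constant (a Fekete-type argument
with slope `λ = sup (φ(s) - C) / s`). Hyperbolicity and rough geodesicity are invariant under
rescaling and under bounded perturbations of the metric, so they pass from `φ ∘ d` to `d`.
-/

open Set

lemma isMetricOn_abs_sub : IsMetricOn (fun x y : ℝ => |x - y|) :=
  ⟨fun x y => by simp [sub_eq_zero], abs_sub_comm, abs_sub_le⟩

namespace IsMetricTransform

variable {φ : ℝ → ℝ}

lemma map_zero (hφ : IsMetricTransform φ) : φ 0 = 0 := by
  simpa using ((hφ ℝ _ isMetricOn_abs_sub).1 0 0).2 rfl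

lemma map_add_le (hφ : IsMetricTransform φ) {s t : ℝ} (hs : 0 ≤ s) (ht : 0 ≤ t) :
    φ (s + t) ≤ φ s + φ t := by
  have h := (hφ ℝ _ isMetricOn_abs_sub).2.2 0 s (s + t)
  simp only [zero_sub, abs_neg, sub_add_cancel_left] at h
  rwa [abs_of_nonneg (add_nonneg hs ht), abs_of_nonneg hs, abs_of_nonneg ht] at h

end IsMetricTransform

lemma ApproxNondecreasing.exists_forall_lt {φ : ℝ → ℝ} (hand : ApproxNondecreasing φ)
    (hub : UnboundedOnNonneg φ) (M : ℝ) : ∃ T, 0 ≤ T ∧ ∀ r, T ≤ r → M < φ r := by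
  obtain ⟨η, -, hmono⟩ := hand
  obtain ⟨T, hT, hMT⟩ := hub (M + η)
  exact ⟨T, hT, fun r hr => by linarith [hmono T r hT hr]⟩

lemma exists_mem_Icc_le_le_add {f : ℝ → ℝ} {b s T : ℝ} (hb : 0 ≤ b)
    (hstep : ∀ u ∈ Icc 0 b, ∀ v ∈ Icc 0 b, |u - v| ≤ 1 → f v ≤ f u + T)
    (hf0 : f 0 ≤ s) (hfb : s ≤ f b) : ∃ u ∈ Icc 0 b, s ≤ f u ∧ f u ≤ s + T := by
  classical
  let g : ℕ → ℝ := fun n => min n b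
  have hg : ∀ n, g n ∈ Icc 0 b := fun n => ⟨le_min n.cast_nonneg hb, min_le_right _ _⟩
  have hex : ∃ n, s ≤ f (g n) := ⟨⌈b⌉₊, by simpa [g, min_eq_right (Nat.le_ceil b)]⟩
  refine ⟨g (Nat.find hex), hg _, Nat.find_spec hex, ?_⟩
  rcases hn : Nat.find hex with _ | m
  · have hT : 0 ≤ T := by linarith [hstep 0 ⟨le_rfl, hb⟩ 0 ⟨le_rfl, hb⟩ (by simp)]
    simp only [g, Nat.cast_zero, min_eq_left hb]
    linarith
  · have hm : f (g m) < s := not_le.1 (Nat.find_min hex (by omega))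
    have hgm : |g m - g (m + 1)| ≤ 1 := by
      refine (abs_min_sub_min_le_max _ _ _ _).trans ?_
      simp
    linarith [hstep _ (hg m) _ (hg (m + 1)) hgm]

lemma exists_dist_mem_Icc_of_roughlyGeodesic {X : Type*} [MetricSpace X] {φ : ℝ → ℝ} {k T : ℝ}
    (hgeo : RoughlyGeodesicK (fun x y : X => φ (dist x y)) k) (hT : ∀ r, T ≤ r → 1 + k < φ r)
    {x y : X} {s : ℝ} (hs : 0 ≤ s) (hsxy : s ≤ dist x y) :
    ∃ z, s ≤ dist x z ∧ dist x z ≤ s + T ∧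
      φ (dist x z) + φ (dist z y) ≤ φ (dist x y) + 3 * k := by
  obtain ⟨b, hb, γ, rfl, rfl, hγ⟩ := hgeo x y
  have hstep : ∀ u ∈ Icc 0 b, ∀ v ∈ Icc 0 b, |u - v| ≤ 1 →
      dist (γ 0) (γ v) ≤ dist (γ 0) (γ u) + T := by
    intro u hu v hv huv
    have hclose : dist (γ u) (γ v) ≤ T := by
      by_contra! h
      linarith [(hγ u v hu hv).2, hT _ h.le]
    linarith [dist_triangle (γ 0) (γ u) (γ v)]
  obtain ⟨u, hu, hsu, hus⟩ := exists_mem_Icc_le_le_add hb hstep (by simpa using hs) hsxy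
  refine ⟨γ u, hsu, hus, ?_⟩
  have h0 : (0 : ℝ) ∈ Icc 0 b := ⟨le_rfl, hb⟩
  have hbb : b ∈ Icc 0 b := ⟨hb, le_rfl⟩
  have hxz := (hγ 0 u h0 hu).2
  have hzy := (hγ u b hu hbb).2
  have hxy := (hγ 0 b h0 hbb).1
  rw [zero_sub, abs_neg, abs_of_nonneg hu.1] at hxz
  rw [abs_of_nonpos (by linarith [hu.2])] at hzy
  rw [zero_sub, abs_neg, abs_of_nonneg hb] at hxy
  linarith

lemma exists_add_le_add_of_roughlyGeodesic {X : Type*} [MetricSpace X] {φ : ℝ → ℝ} {k : ℝ}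
    (hmt : IsMetricTransform φ) (hand : ApproxNondecreasing φ) (hub : UnboundedOnNonneg φ)
    (hray : HasRoughGeodesicRay X (fun x y : X => dist x y)) (hk : 0 ≤ k)
    (hgeo : RoughlyGeodesicK (fun x y : X => φ (dist x y)) k) :
    ∃ C, ∀ s t, 0 ≤ s → 0 ≤ t → φ s + φ t ≤ φ (s + t) + C := by
  obtain ⟨T, hT0, hT⟩ := hand.exists_forall_lt hub (1 + k)
  obtain ⟨l, hl, γ, hγ⟩ := hray
  obtain ⟨η, hη, hmono⟩ := hand
  refine ⟨φ l + φ (l + T) + 3 * η + 3 * k, fun s t hs ht => ?_⟩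
  rcases le_or_gt t l with htl | hlt
  · linarith [hmono s (s + t) hs (by linarith), hmono t l ht htl, hT (l + T) (by linarith)]
  · obtain ⟨hxy, hxy'⟩ := hγ 0 (s + t) le_rfl (by linarith)
    simp only [zero_sub, abs_neg, abs_of_nonneg (by linarith : 0 ≤ s + t)] at hxy hxy'
    obtain ⟨z, hxz, hxz', hz⟩ :=
      exists_dist_mem_Icc_of_roughlyGeodesic hgeo hT hs (by linarith)
    have hzy : t ≤ dist z (γ (s + t)) + (l + T) := by
      linarith [dist_triangle (γ 0) z (γ (s + t))]
    have hzy' := hmt.map_add_le (dist_nonneg (x := z) (y := γ (s + t))) (add_nonneg hl hT0)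
    linarith [hmono s _ hs hxz, hmono t _ ht hzy, hmono _ (s + t + l) dist_nonneg hxy',
      hmt.map_add_le (add_nonneg hs ht) hl]

section ApproxAdditive

variable {φ : ℝ → ℝ} {C : ℝ}

lemma map_natCast_mul_le (h0 : φ 0 = 0)
    (hsub : ∀ s t, 0 ≤ s → 0 ≤ t → φ (s + t) ≤ φ s + φ t) {t : ℝ} (ht : 0 ≤ t) (n : ℕ) :
    φ (n * t) ≤ n * φ t := by
  induction n with
  | zero => simp [h0]
  | succ n ih =>
    push_cast
    rw [add_one_mul (n : ℝ) t]
    linarith [hsub (n * t) t (by positivity) ht]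

lemma natCast_mul_sub_le_map (h0 : φ 0 = 0)
    (hsuper : ∀ s t, 0 ≤ s → 0 ≤ t → φ s + φ t ≤ φ (s + t) + C) {t : ℝ} (ht : 0 ≤ t) (n : ℕ) :
    n * (φ t - C) ≤ φ (n * t) := by
  induction n with
  | zero => simp [h0]
  | succ n ih =>
    push_cast
    rw [add_one_mul (n : ℝ) t]
    linarith [hsuper (n * t) t (by positivity) ht]

lemma nonpos_of_forall_natCast_mul_le {a c : ℝ} (h : ∀ n : ℕ, n * a ≤ c) : a ≤ 0 := by
  by_contra! ha
  obtain ⟨n, hn⟩ := exists_nat_gt (c / a)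
  rw [div_lt_iff₀ ha] at hn
  linarith [h n]

lemma sub_le_div_mul_of_approx_additive (h0 : φ 0 = 0) (hnonneg : ∀ t, 0 ≤ t → 0 ≤ φ t)
    (hsub : ∀ s t, 0 ≤ s → 0 ≤ t → φ (s + t) ≤ φ s + φ t)
    (hsuper : ∀ s t, 0 ≤ s → 0 ≤ t → φ s + φ t ≤ φ (s + t) + C)
    (hand : ApproxNondecreasing φ) {s t : ℝ} (hs : 0 ≤ s) (ht : 0 < t) :
    φ s - C ≤ s / t * φ t := by
  obtain ⟨η, -, hmono⟩ := hand
  refine sub_nonpos.1 (nonpos_of_forall_natCast_mul_le (c := φ t + η) fun n => ?_)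
  set m := ⌈n * s / t⌉₊
  have hm : n * s ≤ m * t := (div_le_iff₀ ht).1 (Nat.le_ceil _)
  have hm' : (m : ℝ) ≤ n * s / t + 1 := (Nat.ceil_lt_add_one (by positivity)).le
  calc n * (φ s - C - s / t * φ t) = n * (φ s - C) - n * s / t * φ t := by ring
    _ ≤ φ (n * s) - n * s / t * φ t := by gcongr; exact natCast_mul_sub_le_map h0 hsuper hs n
    _ ≤ φ (m * t) + η - n * s / t * φ t := by gcongr; exact hmono _ _ (by positivity) hm
    _ ≤ m * φ t + η - n * s / t * φ t := by gcongr; exact map_natCast_mul_le h0 hsub ht.le m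
    _ ≤ (n * s / t + 1) * φ t + η - n * s / t * φ t := by gcongr; exact hnonneg t ht.le
    _ = φ t + η := by ring

lemma exists_abs_sub_mul_le_of_approx_additive (h0 : φ 0 = 0) (hnonneg : ∀ t, 0 ≤ t → 0 ≤ φ t)
    (hsub : ∀ s t, 0 ≤ s → 0 ≤ t → φ (s + t) ≤ φ s + φ t)
    (hsuper : ∀ s t, 0 ≤ s → 0 ≤ t → φ s + φ t ≤ φ (s + t) + C)
    (hand : ApproxNondecreasing φ) (hub : UnboundedOnNonneg φ) :
    ∃ lam, 0 < lam ∧ ∀ t, 0 ≤ t → |φ t - lam * t| ≤ C := by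
  have key : ∀ {s t : ℝ}, 0 ≤ s → 0 < t → φ s - C ≤ s / t * φ t :=
    sub_le_div_mul_of_approx_additive h0 hnonneg hsub hsuper hand
  have hC : 0 ≤ C := by simpa [h0] using hsuper 0 0 le_rfl le_rfl
  let S := (fun s => (φ s - C) / s) '' Ioi 0
  have hS : S.Nonempty := nonempty_Ioi.image _
  have hSbdd : BddAbove S := ⟨φ 1, by
    rintro _ ⟨s, hs, rfl⟩
    rw [div_le_iff₀ hs]
    linarith [key (le_of_lt hs) one_pos]⟩
  have hle : ∀ t, 0 < t → sSup S ≤ φ t / t := fun t ht =>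
    csSup_le hS <| by
      rintro _ ⟨s, hs, rfl⟩
      rw [div_le_div_iff₀ hs ht]
      calc (φ s - C) * t ≤ s / t * φ t * t := by gcongr; exact key (le_of_lt hs) ht
        _ = φ t * s := by field_simp
  have hge : ∀ t, 0 < t → (φ t - C) / t ≤ sSup S := fun t ht =>
    le_csSup hSbdd (mem_image_of_mem _ ht)
  obtain ⟨s₀, hs₀, hCs₀⟩ := hub C
  have hs₀pos : 0 < s₀ := hs₀.lt_of_ne (by rintro rfl; linarith [h0])
  refine ⟨sSup S, (div_pos (by linarith) hs₀pos).trans_le (hge s₀ hs₀pos), fun t ht => ?_⟩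
  rcases ht.eq_or_lt with rfl | ht
  · simpa [h0] using hC
  · have h1 := (le_div_iff₀ ht).1 (hle t ht)
    have h2 := (div_le_iff₀ ht).1 (hge t ht)
    rw [abs_le]
    constructor <;> linarith

end ApproxAdditive

section RoughIsometry

variable {X : Type*} {d d' : X → X → ℝ} {C lam : ℝ}

lemma IsDeltaHyp.of_abs_sub_le {δ : ℝ} (h : IsDeltaHyp d δ) (hC : ∀ x y, |d' x y - d x y| ≤ C) :
    IsDeltaHyp d' (δ + 3 * C) := by
  have hgp : ∀ w p q, |gromovProd d' w p q - gromovProd d w p q| ≤ 3 * C / 2 := by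
    intro w p q
    have h1 := abs_le.1 (hC p w)
    have h2 := abs_le.1 (hC q w)
    have h3 := abs_le.1 (hC p q)
    simp only [gromovProd]
    rw [abs_le]
    constructor <;> linarith
  intro w x y z
  have hxz := abs_le.1 (hgp w x z)
  have hyz := abs_le.1 (hgp w y z)
  have hxy := abs_le.1 (hgp w x y)
  have hmin : min (gromovProd d' w x z) (gromovProd d' w y z) ≤
      min (gromovProd d w x z) (gromovProd d w y z) + 3 * C / 2 := by
    rw [← min_add_add_right]
    exact min_le_min (by linarith) (by linarith)
  linarith [h w x y z]

lemma IsDeltaHyp.of_const_mul {δ : ℝ} (hlam : 0 < lam)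
    (h : IsDeltaHyp (fun x y => lam * d x y) δ) : IsDeltaHyp d (δ / lam) := by
  have hscale : ∀ w p q, gromovProd (fun x y => lam * d x y) w p q = lam * gromovProd d w p q := by
    intro w p q
    simp only [gromovProd]
    ring
  intro w x y z
  have hw := h w x y z
  rw [hscale, hscale, hscale, ← mul_min_of_nonneg _ _ hlam.le] at hw
  refine le_of_mul_le_mul_left ?_ hlam
  rw [mul_sub, mul_div_cancel₀ _ hlam.ne']
  exact hw

lemma RoughlyGeodesicK.of_abs_sub_le {k : ℝ} (h : RoughlyGeodesicK d k)
    (hC : ∀ x y, |d' x y - d x y| ≤ C) : RoughlyGeodesicK d' (k + C) := by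
  intro x y
  obtain ⟨b, hb, γ, h0, hb', hγ⟩ := h x y
  refine ⟨b, hb, γ, h0, hb', fun t s ht hs => ?_⟩
  have := hγ t s ht hs
  have := abs_le.1 (hC (γ t) (γ s))
  constructor <;> linarith

lemma RoughlyGeodesicK.of_const_mul {k : ℝ} (hlam : 0 < lam)
    (h : RoughlyGeodesicK (fun x y => lam * d x y) k) : RoughlyGeodesicK d (k / lam) := by
  intro x y
  obtain ⟨b, hb, γ, h0, hb', hγ⟩ := h x y
  refine ⟨b / lam, by positivity, fun t => γ (lam * t), by simpa using h0,
    show γ (lam * (b / lam)) = y by rwa [mul_div_cancel₀ _ hlam.ne'], fun t s ht hs => ?_⟩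
  have hmem : ∀ {u}, u ∈ Icc 0 (b / lam) → lam * u ∈ Icc 0 b := fun hu =>
    ⟨by nlinarith [hu.1], (le_div_iff₀' hlam).1 hu.2⟩
  obtain ⟨h1, h2⟩ := hγ _ _ (hmem ht) (hmem hs)
  rw [← mul_sub, abs_mul, abs_of_pos hlam] at h1 h2
  constructor
  · refine le_of_mul_le_mul_left ?_ hlam
    rw [mul_sub, mul_div_cancel₀ _ hlam.ne']
    exact h1
  · refine le_of_mul_le_mul_left ?_ hlam
    rw [mul_add, mul_div_cancel₀ _ hlam.ne']
    exact h2

end RoughIsometry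

/-- Metric Transform Rigidity. -/
theorem stmt_2 {X : Type} [MetricSpace X]
    (hray : HasRoughGeodesicRay X (fun x y : X => dist x y))
    (φ : ℝ → ℝ)
    (hnonneg : ∀ t : ℝ, 0 ≤ t → 0 ≤ φ t)
    (hmt : IsMetricTransform φ)
    (hand : ApproxNondecreasing φ)
    (hub : UnboundedOnNonneg φ)
    (hhyp : IsGromovHyp (fun x y : X => φ (dist x y)))
    (hgeo : ∃ k : ℝ, 0 ≤ k ∧ RoughlyGeodesicK (fun x y : X => φ (dist x y)) k) :
    ApproxDilation φ ∧ IsGromovHyp (fun x y : X => dist x y) ∧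
      ∃ k : ℝ, 0 ≤ k ∧ RoughlyGeodesicK (fun x y : X => dist x y) k := by
  obtain ⟨k, hk, hgeo⟩ := hgeo
  obtain ⟨δ, hδ, hhyp⟩ := hhyp
  obtain ⟨C, hsuper⟩ := exists_add_le_add_of_roughlyGeodesic hmt hand hub hray hk hgeo
  obtain ⟨lam, hlam, hdil⟩ := exists_abs_sub_mul_le_of_approx_additive hmt.map_zero hnonneg
    (fun _ _ => hmt.map_add_le) hsuper hand hub
  have hC : 0 ≤ C := (abs_nonneg _).trans (hdil 0 le_rfl)
  have hclose : ∀ x y : X, |lam * dist x y - φ (dist x y)| ≤ C := fun x y => by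
    rw [abs_sub_comm]
    exact hdil _ dist_nonneg
  exact ⟨⟨lam, C, hlam, hC, hdil⟩,
    ⟨(δ + 3 * C) / lam, by positivity, (hhyp.of_abs_sub_le hclose).of_const_mul hlam⟩,
    ⟨(k + C) / lam, by positivity, (hgeo.of_abs_sub_le hclose).of_const_mul hlam⟩⟩
end

section
/- Let φ : [0,∞) → [0,∞) be an unbounded, approximately nondecreasing metric transform. Then the transformed Euclidean half line ([0,∞), |·|_φ) admits a rough isometric embedding into some Gromov hyperbolic metric space if and only if either (i) φ is an approximate dilation, or (ii) φ is logarithm-like. -/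
/-!
If `φ` is logarithm-like, the distance `|·|_φ` is itself approximately ultrametric, hence Gromov
hyperbolic; if `φ` is an approximate dilation, `t ↦ λ t` embeds the transformed half line roughly
isometrically into the real line. Conversely, the four-point condition pulls back along a rough
isometric embedding. Applied to the points `0 ≤ x ≤ x + a ≤ x + a + y`, it shows that as soon as
`φ (2 T) - φ T` is large for one `T`, `φ` is superadditive up to a constant. A metric transform is
subadditive, so `φ` is then quasi-additive and stays within bounded distance of `λ t`,
`λ = inf_u φ u / u`; unboundedness forces `λ > 0`.
-/

def FourPoint {X : Type*} (d : X → X → ℝ) (δ : ℝ) : Prop :=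
  ∀ x y z w : X, d x y + d z w ≤ max (d x z + d y w) (d x w + d y z) + 2 * δ

theorem isDeltaHyp_iff_fourPoint {X : Type*} {d : X → X → ℝ} {δ : ℝ} :
    IsDeltaHyp d δ ↔ FourPoint d δ := by
  have key : ∀ w x y z : X,
      min (gromovProd d w x z) (gromovProd d w y z) - δ ≤ gromovProd d w x y ↔
        d x y + d z w ≤ max (d x z + d y w) (d x w + d y z) + 2 * δ := by
    intro w x y z
    rw [sub_le_iff_le_add, min_le_iff, ← max_add_add_right, le_max_iff]
    simp only [gromovProd]
    constructor <;> rintro (h | h)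
    exacts [.inl (by linarith), .inr (by linarith), .inl (by linarith), .inr (by linarith)]
  exact ⟨fun h x y z w => (key w x y z).1 (h w x y z), fun h w x y z => (key w x y z).2 (h x y z w)⟩

theorem FourPoint.comap_of_roughIsometric {X Y : Type*} {d : X → X → ℝ} {e : Y → Y → ℝ}
    {δ k : ℝ} (he : FourPoint e δ) {f : X → Y}
    (hf : ∀ x y, d x y - k ≤ e (f x) (f y) ∧ e (f x) (f y) ≤ d x y + k) :
    FourPoint d (δ + 2 * k) := by
  intro x y z w
  have h := he (f x) (f y) (f z) (f w)
  have hmax : max (e (f x) (f z) + e (f y) (f w)) (e (f x) (f w) + e (f y) (f z)) ≤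
      max (d x z + d y w) (d x w + d y z) + 2 * k := by
    rw [← max_add_add_right]
    exact max_le_max (by linarith [hf x z, hf y w]) (by linarith [hf x w, hf y z])
  linarith [hf x y, hf z w]

theorem FourPoint.of_approxUltrametric {X : Type*} {d : X → X → ℝ} {δ : ℝ}
    (hsymm : ∀ x y, d x y = d y x) (hd : ∀ x y z, d x y ≤ max (d x z) (d z y) + δ) :
    FourPoint d δ := by
  intro x y z w
  have h₁ := hd x y z
  have h₂ := hd x y w
  have h₃ := hd z w y
  have h₄ := hd z w x
  rw [hsymm z y, hsymm w y] at *
  rw [hsymm z x] at h₄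
  simp only [← sub_le_iff_le_add, le_max_iff] at h₁ h₂ h₃ h₄ ⊢
  rcases le_total (d x y) (d z w) with h | h <;>
  rcases h₁ with h₁ | h₁ <;> rcases h₂ with h₂ | h₂ <;> rcases h₃ with h₃ | h₃ <;>
  rcases h₄ with h₄ | h₄ <;>
  first | exact .inl (by linarith) | exact .inr (by linarith)

theorem fourPoint_real : FourPoint (dist : ℝ → ℝ → ℝ) 0 := by
  intro x y z w
  simp only [Real.dist_eq, mul_zero, add_zero, le_max_iff]
  rcases abs_cases (x - y) with ⟨h1, h1'⟩ | ⟨h1, h1'⟩ <;>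
  rcases abs_cases (z - w) with ⟨h2, h2'⟩ | ⟨h2, h2'⟩ <;>
  rcases abs_cases (x - z) with ⟨h3, h3'⟩ | ⟨h3, h3'⟩ <;>
  rcases abs_cases (y - w) with ⟨h4, h4'⟩ | ⟨h4, h4'⟩ <;>
  rcases abs_cases (x - w) with ⟨h5, h5'⟩ | ⟨h5, h5'⟩ <;>
  rcases abs_cases (y - z) with ⟨h6, h6'⟩ | ⟨h6, h6'⟩ <;>
  first | exact .inl (by linarith) | exact .inr (by linarith)

theorem isMetricOn_dist {X : Type*} [MetricSpace X] : IsMetricOn (dist : X → X → ℝ) :=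
  ⟨fun _ _ => dist_eq_zero, dist_comm, dist_triangle⟩

theorem IsGromovHyp.of_approxUltrametric {X : Type*} {d : X → X → ℝ}
    (hsymm : ∀ x y, d x y = d y x) (hd : ApproxUltrametric d) : IsGromovHyp d :=
  let ⟨δ, hδ, hult⟩ := hd
  ⟨δ, hδ, isDeltaHyp_iff_fourPoint.2 (FourPoint.of_approxUltrametric hsymm hult)⟩

theorem IsMetricTransform.map_zero_s4 {φ : ℝ → ℝ} (hφ : IsMetricTransform φ) : φ 0 = 0 := by
  simpa using ((hφ ℝ dist isMetricOn_dist).1 0 0).2 rfl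

theorem IsMetricTransform.map_add_le_s4 {φ : ℝ → ℝ} (hφ : IsMetricTransform φ) {a b : ℝ}
    (ha : 0 ≤ a) (hb : 0 ≤ b) : φ (a + b) ≤ φ a + φ b := by
  have h := (hφ ℝ dist isMetricOn_dist).2.2 0 a (a + b)
  simp only [Real.dist_eq] at h
  rwa [zero_sub, zero_sub, abs_neg, abs_neg,
    sub_add_cancel_left, abs_neg, abs_of_nonneg ha, abs_of_nonneg hb,
    abs_of_nonneg (add_nonneg ha hb)] at h

theorem halfLineDist_eq (φ : ℝ → ℝ) (x y : {t : ℝ // 0 ≤ t}) :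
    halfLineDist φ x y = φ (dist x y) := rfl

theorem FourPoint.halfLine {φ : ℝ → ℝ} {δ : ℝ} (h : FourPoint (halfLineDist φ) δ) {x a y : ℝ}
    (hx : 0 ≤ x) (ha : 0 ≤ a) (hy : 0 ≤ y) :
    φ (x + a) + φ (a + y) ≤ max (φ x + φ y) (φ (x + a + y) + φ a) + 2 * δ := by
  have key := h ⟨0, le_rfl⟩ ⟨x + a, by positivity⟩ ⟨x, hx⟩ ⟨x + a + y, by positivity⟩
  have hd : ∀ p q : ℝ, p ≤ q → |p - q| = q - p := fun p q hpq => by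
    rw [abs_sub_comm, abs_of_nonneg (sub_nonneg.2 hpq)]
  simp only [halfLineDist] at key
  rw [hd 0 (x + a) (by linarith), hd x (x + a + y) (by linarith), hd 0 x hx,
    hd (x + a) _ (by linarith), hd 0 _ (by linarith),
    abs_of_nonneg (show 0 ≤ x + a - x by linarith)] at key
  convert key using 5 <;> ring

theorem approxUltrametric_halfLineDist {φ : ℝ → ℝ} (hφ : ApproxNondecreasing φ)
    (hlog : LogarithmLike φ) : ApproxUltrametric (halfLineDist φ) := by
  obtain ⟨η, -, hmono⟩ := hφ
  obtain ⟨C, hC⟩ := hlog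
  refine ⟨max 0 (C + η), le_max_left _ _, fun x y z => ?_⟩
  have hm : 0 ≤ max (dist x z) (dist z y) := le_max_of_le_left dist_nonneg
  have hxy : dist x y ≤ 2 * max (dist x z) (dist z y) := by
    linarith [dist_triangle x z y, le_max_left (dist x z) (dist z y),
      le_max_right (dist x z) (dist z y)]
  have hφm : φ (max (dist x z) (dist z y)) ≤ max (φ (dist x z)) (φ (dist z y)) := by
    rcases max_choice (dist x z) (dist z y) with h | h <;> rw [h]
    exacts [le_max_left _ _, le_max_right _ _]
  simp only [halfLineDist_eq]
  linarith [hmono _ _ dist_nonneg hxy, hC _ hm, le_max_right 0 (C + η)]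

section QuasiAdditive

variable {φ : ℝ → ℝ} {η K : ℝ}

theorem nat_mul_sub_le_of_superadditive (h0 : φ 0 = 0)
    (hsuper : ∀ a b, 0 ≤ a → 0 ≤ b → φ a + φ b ≤ φ (a + b) + K) (m : ℕ) {t : ℝ} (ht : 0 ≤ t) :
    m * (φ t - K) ≤ φ (m * t) := by
  induction m with
  | zero => simp [h0]
  | succ m ih =>
    have := hsuper (m * t) t (by positivity) ht
    push_cast
    simp only [add_one_mul]
    linarith

theorem le_nat_mul_add_of_subadditive (hpos : ∀ t, 0 ≤ t → 0 ≤ φ t) (h0 : φ 0 = 0)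
    (hsub : ∀ a b, 0 ≤ a → 0 ≤ b → φ (a + b) ≤ φ a + φ b)
    (hmono : ∀ t s, 0 ≤ t → t ≤ s → φ t ≤ φ s + η) (n : ℕ) {s u : ℝ} (hs : 0 ≤ s)
    (hu : 0 ≤ u) (hsu : s ≤ n * u) : φ s ≤ n * φ u + η := by
  induction n generalizing s with
  | zero =>
    obtain rfl : s = 0 := le_antisymm (by simpa using hsu) hs
    rw [Nat.cast_zero, zero_mul, zero_add, h0]
    linarith [hmono 0 0 le_rfl le_rfl]
  | succ n ih =>
    have hφu := hpos u hu
    rcases le_total s u with h | h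
    · have := hmono s u hs h
      push_cast
      nlinarith [(Nat.cast_nonneg n : (0 : ℝ) ≤ n)]
    · have h1 := ih (sub_nonneg.2 h) (by push_cast at hsu; linarith)
      have h2 := hsub (s - u) u (sub_nonneg.2 h) hu
      rw [sub_add_cancel] at h2
      push_cast
      linarith

theorem sub_le_mul_div_of_quasiAdditive (hpos : ∀ t, 0 ≤ t → 0 ≤ φ t) (h0 : φ 0 = 0)
    (hsub : ∀ a b, 0 ≤ a → 0 ≤ b → φ (a + b) ≤ φ a + φ b)
    (hmono : ∀ t s, 0 ≤ t → t ≤ s → φ t ≤ φ s + η)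
    (hsuper : ∀ a b, 0 ≤ a → 0 ≤ b → φ a + φ b ≤ φ (a + b) + K) {t u : ℝ} (ht : 0 ≤ t)
    (hu : 0 < u) : φ t - K ≤ t * (φ u / u) := by
  -- Cover `m * t` by `⌈m * t / u⌉` copies of `u`, then let `m → ∞`.
  have hbound : ∀ m : ℕ, 0 < m → φ t - K ≤ t * (φ u / u) + (φ u + η) / m := by
    intro m hm
    have hm' : (0 : ℝ) < m := Nat.cast_pos.2 hm
    have hceil : (⌈m * t / u⌉₊ : ℝ) ≤ m * t / u + 1 := (Nat.ceil_lt_add_one (by positivity)).le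
    have h1 := nat_mul_sub_le_of_superadditive h0 hsuper m ht
    have h2 := le_nat_mul_add_of_subadditive hpos h0 hsub hmono ⌈m * t / u⌉₊ (by positivity)
      hu.le ((div_le_iff₀ hu).1 (Nat.le_ceil _))
    have h3 := mul_le_mul_of_nonneg_right hceil (hpos u hu.le)
    rw [← sub_le_iff_le_add', le_div_iff₀ hm']
    calc (φ t - K - t * (φ u / u)) * m = m * (φ t - K) - m * t / u * φ u := by
          field_simp
      _ ≤ φ u + η := by linarith
  refine ge_of_tendsto ?_ (Filter.eventually_atTop.2 ⟨1, fun m hm => hbound m hm⟩)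
  simpa using tendsto_const_nhds.add (tendsto_const_div_atTop_nhds_zero_nat (φ u + η))

theorem approxDilation_of_quasiAdditive (hpos : ∀ t, 0 ≤ t → 0 ≤ φ t)
    (h0 : φ 0 = 0) (hsub : ∀ a b, 0 ≤ a → 0 ≤ b → φ (a + b) ≤ φ a + φ b)
    (hφ : ApproxNondecreasing φ)
    (hsuper : ∀ a b, 0 ≤ a → 0 ≤ b → φ a + φ b ≤ φ (a + b) + K) (hK : 0 ≤ K)
    (hub : UnboundedOnNonneg φ) : ApproxDilation φ := by
  obtain ⟨η, -, hmono⟩ := hφ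
  set S := (fun u => φ u / u) '' Set.Ioi (0 : ℝ)
  have hbdd : BddBelow S := ⟨0, by
    rintro _ ⟨u, hu, rfl⟩
    exact div_nonneg (hpos u hu.le) hu.le⟩
  have hlow : ∀ t, 0 < t → sInf S * t ≤ φ t := fun t ht =>
    (le_div_iff₀ ht).1 (csInf_le hbdd ⟨t, ht, rfl⟩)
  have hup : ∀ t, 0 ≤ t → φ t ≤ sInf S * t + K := by
    intro t ht
    rcases ht.eq_or_lt with rfl | ht
    · simpa [h0] using hK
    · have : (φ t - K) / t ≤ sInf S := by
        refine le_csInf (Set.nonempty_Ioi.image _) ?_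
        rintro _ ⟨u, hu, rfl⟩
        rw [div_le_iff₀ ht, mul_comm]
        exact sub_le_mul_div_of_quasiAdditive hpos h0 hsub hmono hsuper ht.le hu
      linarith [(div_le_iff₀ ht).1 this]
  have hS : 0 < sInf S := by
    by_contra! hS
    obtain ⟨t, ht, hKt⟩ := hub K
    nlinarith [hup t ht]
  refine ⟨sInf S, K, hS, hK, fun t ht => abs_le.2 ⟨?_, by linarith [hup t ht]⟩⟩
  rcases ht.eq_or_lt with rfl | ht
  · simp [h0, hK]
  · linarith [hlow t ht]

end QuasiAdditive

section NotLogarithmLike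

variable {φ : ℝ → ℝ} {η Δ : ℝ}

theorem add_le_of_fourPoint (hmono : ∀ t s, 0 ≤ t → t ≤ s → φ t ≤ φ s + η)
    (hFP : ∀ x a y, 0 ≤ x → 0 ≤ a → 0 ≤ y →
      φ (x + a) + φ (a + y) ≤ max (φ x + φ y) (φ (x + a + y) + φ a) + Δ)
    {T : ℝ} (hT : 0 ≤ T) (hjump : Δ + η < φ (2 * T) - φ T) {u : ℝ} (hu : T ≤ u) :
    φ u + (φ (2 * T) - φ T - Δ) ≤ φ (u + T) := by
  have h := hFP T T (u - T) hT hT (by linarith)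
  rw [← two_mul, add_sub_cancel, show 2 * T + (u - T) = u + T by ring] at h
  -- the jump rules out the first alternative of the maximum
  rcases max_cases (φ T + φ (u - T)) (φ (u + T) + φ T) with ⟨hmax, -⟩ | ⟨hmax, -⟩ <;>
    rw [hmax] at h <;> linarith [hmono (u - T) u (by linarith) (by linarith)]

theorem add_le_add_of_fourPoint (hη : 0 ≤ η) (hΔ : 0 ≤ Δ)
    (hmono : ∀ t s, 0 ≤ t → t ≤ s → φ t ≤ φ s + η)
    (hFP : ∀ x a y, 0 ≤ x → 0 ≤ a → 0 ≤ y →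
      φ (x + a) + φ (a + y) ≤ max (φ x + φ y) (φ (x + a + y) + φ a) + Δ)
    {T : ℝ} (hT : 0 ≤ T) (hjump : 2 * (Δ + η) < φ (2 * T) - φ T) {x a y : ℝ} (hx : T ≤ x)
    (ha : T ≤ a) (hy : T ≤ y) : φ (x + a) + φ (a + y) ≤ φ (x + a + y) + φ a + Δ := by
  have h := hFP x a y (by linarith) (by linarith) (by linarith)
  have hx' := add_le_of_fourPoint hmono hFP hT (by linarith) hx
  have hy' := add_le_of_fourPoint hmono hFP hT (by linarith) hy
  rcases max_cases (φ x + φ y) (φ (x + a + y) + φ a) with ⟨hmax, -⟩ | ⟨hmax, -⟩ <;>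
    rw [hmax] at h <;>
    linarith [hmono (x + T) (x + a) (by linarith) (by linarith),
      hmono (y + T) (a + y) (by linarith) (by linarith)]

theorem exists_superadditive_of_not_logarithmLike (hpos : ∀ t, 0 ≤ t → 0 ≤ φ t)
    (hφ : ApproxNondecreasing φ)
    (hFP : ∀ x a y, 0 ≤ x → 0 ≤ a → 0 ≤ y →
      φ (x + a) + φ (a + y) ≤ max (φ x + φ y) (φ (x + a + y) + φ a) + Δ)
    (hΔ : 0 ≤ Δ) (hlog : ¬LogarithmLike φ) :
    ∃ K, 0 ≤ K ∧ ∀ a b, 0 ≤ a → 0 ≤ b → φ a + φ b ≤ φ (a + b) + K := by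
  obtain ⟨η, hη, hmono⟩ := hφ
  simp only [LogarithmLike, not_exists, not_forall, not_le] at hlog
  obtain ⟨T, hT, hjump⟩ := hlog (2 * (Δ + η))
  have hφT := hpos T hT
  have hφ2T := hpos (2 * T) (by linarith)
  have key : ∀ a b, 0 ≤ a → a ≤ b → φ a + φ b ≤ φ (a + b) + (φ (2 * T) + φ T + 2 * η + Δ) := by
    intro a b ha hab
    rcases le_total a (2 * T) with h | h
    · linarith [hmono a (2 * T) ha h, hmono b (a + b) (ha.trans hab) (by linarith)]
    · have := add_le_add_of_fourPoint hη hΔ hmono hFP hT hjump (x := a - T) (a := T) (y := b)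
        (by linarith) le_rfl (by linarith)
      rw [sub_add_cancel] at this
      linarith [hmono b (T + b) (by linarith) (by linarith)]
  refine ⟨φ (2 * T) + φ T + 2 * η + Δ, by linarith, fun a b ha hb => ?_⟩
  rcases le_total a b with h | h
  · exact key a b ha h
  · rw [add_comm a b, add_comm (φ a)]
    exact key b a hb h

end NotLogarithmLike

/-- The transformed half line roughly isometrically embeds in a Gromov
hyperbolic space iff `φ` is an approximate dilation or logarithm-like. -/
theorem stmt_4 (φ : ℝ → ℝ)
    (hnonneg : ∀ t : ℝ, 0 ≤ t → 0 ≤ φ t)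
    (hmt : IsMetricTransform φ)
    (hand : ApproxNondecreasing φ)
    (hub : UnboundedOnNonneg φ) :
    (∃ (Y : Type) (dY : Y → Y → ℝ), IsMetricOn dY ∧ IsGromovHyp dY ∧
        ∃ (f : {t : ℝ // 0 ≤ t} → Y) (k : ℝ), 0 ≤ k ∧
          ∀ x y : {t : ℝ // 0 ≤ t},
            halfLineDist φ x y - k ≤ dY (f x) (f y) ∧
            dY (f x) (f y) ≤ halfLineDist φ x y + k) ↔
      (ApproxDilation φ ∨ LogarithmLike φ) := by
  constructor
  · rintro ⟨Y, dY, -, ⟨δ, hδ, hhyp⟩, f, k, hk, hf⟩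
    refine or_iff_not_imp_right.2 fun hlog => ?_
    have hFP := (isDeltaHyp_iff_fourPoint.1 hhyp).comap_of_roughIsometric hf
    obtain ⟨K, hK, hsuper⟩ := exists_superadditive_of_not_logarithmLike hnonneg hand
      (fun x a y hx ha hy => hFP.halfLine hx ha hy) (by positivity) hlog
    exact approxDilation_of_quasiAdditive hnonneg hmt.map_zero_s4 (fun a b => hmt.map_add_le_s4) hand
      hsuper hK hub
  · rintro (⟨lam, k, hlam, hk, hdil⟩ | hlog)
    · refine ⟨ℝ, dist, isMetricOn_dist, ⟨0, le_rfl, isDeltaHyp_iff_fourPoint.2 fourPoint_real⟩,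
        fun x => lam * x, k, hk, fun x y => ?_⟩
      have h := abs_le.1 (hdil |x.1 - y.1| (abs_nonneg _))
      rw [halfLineDist, Real.dist_eq, ← mul_sub, abs_mul, abs_of_pos hlam]
      constructor <;> linarith
    · have hmetric := hmt _ dist (isMetricOn_dist (X := {t : ℝ // 0 ≤ t}))
      exact ⟨_, halfLineDist φ, hmetric,
        .of_approxUltrametric hmetric.2.1 (approxUltrametric_halfLineDist hand hlog),
        id, 0, le_rfl, fun x y => by simp⟩
end
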